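/- arXiv:2102.04576 — 3 statements merged into one kernel-verified Lean document; each statement's English description precedes it below -/
import Mathlib

section
/- Under the Mallows measure p_q on S_n with q > 0, the probability that a fixed set of positions {s, s+1, …, s+k-1} ⊆ {1,…,n-1} all are descents (i.e., ω(s) > ω(s+1) > ⋯ > ω(s+k)) equals q^{C(k+1,2)}/[k+1]_q!. -/
/-- Number of inversions of a permutation of `Fin n`. -/
def inversions (n : ℕ) (ω : Equiv.Perm (Fin n)) : ℕ :=
  ((Finset.univ : Finset (Fin n × Fin n)).filter
    (fun p => p.1 < p.2 ∧ ω p.2 < ω p.1)).card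

/-- The q-factorial `[n]_q! = ∏_{i=1}^{n-1} (1 + q + ⋯ + q^i)`. -/
noncomputable def qFactorial (q : ℝ) (n : ℕ) : ℝ :=
  ∏ i ∈ Finset.range n, ∑ j ∈ Finset.range (i + 1), q ^ j

/-- The Mallows measure on `S_n`. -/
noncomputable def mallows (q : ℝ) (n : ℕ) (ω : Equiv.Perm (Fin n)) : ℝ :=
  q ^ inversions n ω / qFactorial q n

/-!
Let `B` be the block of positions `s - 1, …, s + k - 1` (counted from `0`). Every permutation
factors uniquely as `ω = τ * σ̃`, where `τ` is increasing on `B` and `σ̃` permutes `B` among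
itself as `σ ∈ S_{k+1}` does. Because `B` is an interval, a pair of positions not inside `B` keeps
its relative order under `σ̃`, so `inv ω = inv τ + inv σ`. Summing `q ^ inv` over the
factorization gives `∑_ω q ^ inv ω = A · ∑_σ q ^ inv σ` with `A = ∑_τ q ^ inv τ`, while `ω` descends
all along `B` exactly when `σ` is the reversal, which has `C(k+1, 2)` inversions; the factor `A`
cancels. Applied to the block `{1, …, m}` of `S_{m+1}`, where `τ` is determined by `τ 0` and has
`τ 0` inversions, the same factorization gives the recursion showing `∑_ω q ^ inv ω = [n]_q!`.
-/

open Finset Equiv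

lemma Set.OrdConnected.lt_of_mem_of_notMem {α : Type*} [LinearOrder α] {s : Set α}
    (hs : s.OrdConnected) {i j x : α} (hi : i ∈ s) (hj : j ∉ s) (hij : i < j) (hx : x ∈ s) :
    x < j :=
  lt_of_not_ge fun hjx ↦ hj (hs.out hi hx ⟨hij.le, hjx⟩)

lemma Set.OrdConnected.lt_of_notMem_of_mem {α : Type*} [LinearOrder α] {s : Set α}
    (hs : s.OrdConnected) {i j x : α} (hi : i ∉ s) (hj : j ∈ s) (hij : i < j) (hx : x ∈ s) :
    i < x :=
  hs.dual.lt_of_mem_of_notMem (α := αᵒᵈ) hj hi hij hx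

namespace Equiv.Perm

section Block

variable {m n : ℕ} (e : Fin m ↪o Fin n)

@[simp]
lemma viaFintypeEmbedding_apply_orderEmbedding (σ : Perm (Fin m)) (a : Fin m) :
    σ.viaFintypeEmbedding e.toEmbedding (e a) = e (σ a) :=
  viaFintypeEmbedding_apply_image σ e.toEmbedding a

lemma viaFintypeEmbedding_inv (σ : Perm (Fin m)) :
    (σ.viaFintypeEmbedding e.toEmbedding)⁻¹ = σ⁻¹.viaFintypeEmbedding e.toEmbedding :=
  rfl

lemma mul_viaFintypeEmbedding_comp (τ : Perm (Fin n)) (σ : Perm (Fin m)) :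
    (τ * σ.viaFintypeEmbedding e.toEmbedding) ∘ e = τ ∘ e ∘ σ := by
  ext a
  simp

lemma viaFintypeEmbedding_mem_range_iff (σ : Perm (Fin m)) {i : Fin n} :
    σ.viaFintypeEmbedding e.toEmbedding i ∈ Set.range e ↔ i ∈ Set.range e := by
  by_cases hi : i ∈ Set.range e
  · obtain ⟨a, rfl⟩ := hi
    simp
  · rw [viaFintypeEmbedding_apply_notMem_range _ _ hi]

lemma viaFintypeEmbedding_lt_of_ordConnected (hB : (Set.range e).OrdConnected)
    (σ : Perm (Fin m)) {i j : Fin n} (hP : ¬(i ∈ Set.range e ∧ j ∈ Set.range e)) (hij : i < j) :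
    σ.viaFintypeEmbedding e.toEmbedding i < σ.viaFintypeEmbedding e.toEmbedding j := by
  by_cases hi : i ∈ Set.range e <;> by_cases hj : j ∈ Set.range e
  · exact absurd ⟨hi, hj⟩ hP
  · rw [viaFintypeEmbedding_apply_notMem_range _ _ hj]
    exact hB.lt_of_mem_of_notMem hi hj hij ((viaFintypeEmbedding_mem_range_iff e σ).2 hi)
  · rw [viaFintypeEmbedding_apply_notMem_range _ _ hi]
    exact hB.lt_of_notMem_of_mem hi hj hij ((viaFintypeEmbedding_mem_range_iff e σ).2 hj)
  · rwa [viaFintypeEmbedding_apply_notMem_range _ _ hi,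
      viaFintypeEmbedding_apply_notMem_range _ _ hj]

lemma viaFintypeEmbedding_lt_iff_of_ordConnected (hB : (Set.range e).OrdConnected)
    (σ : Perm (Fin m)) {i j : Fin n} (hP : ¬(i ∈ Set.range e ∧ j ∈ Set.range e)) :
    σ.viaFintypeEmbedding e.toEmbedding i < σ.viaFintypeEmbedding e.toEmbedding j ↔ i < j := by
  refine ⟨fun h ↦ lt_of_not_ge fun hji ↦ ?_, viaFintypeEmbedding_lt_of_ordConnected e hB σ hP⟩
  rcases hji.lt_or_eq with hji | rfl
  · exact (viaFintypeEmbedding_lt_of_ordConnected e hB σ (by tauto) hji).not_gt h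
  · exact h.false

variable {τ : Perm (Fin n)}

lemma card_inversions_mul_viaFintypeEmbedding_filter_mem_range (hτ : StrictMono (τ ∘ e))
    (σ : Perm (Fin m)) :
    #(univ.filter fun x : Fin n × Fin n ↦
        (x.1 < x.2 ∧ (τ * σ.viaFintypeEmbedding e.toEmbedding) x.2 <
          (τ * σ.viaFintypeEmbedding e.toEmbedding) x.1) ∧
        (x.1 ∈ Set.range e ∧ x.2 ∈ Set.range e)) = inversions m σ := by
  rw [inversions, ← card_map (Function.Embedding.prodMap e.toEmbedding e.toEmbedding)]
  congr 1
  ext ⟨i, j⟩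
  simp only [coe_mul, Function.comp_apply, Set.mem_range, mem_filter, mem_univ, true_and, mem_map,
    Function.Embedding.coe_prodMap, RelEmbedding.coe_toEmbedding, Prod.exists, Prod.map_apply,
    Prod.mk.injEq]
  constructor
  · rintro ⟨⟨hij, hτij⟩, ⟨a, rfl⟩, ⟨b, rfl⟩⟩
    rw [viaFintypeEmbedding_apply_orderEmbedding, viaFintypeEmbedding_apply_orderEmbedding] at hτij
    exact ⟨a, b, ⟨e.lt_iff_lt.1 hij, hτ.lt_iff_lt.1 hτij⟩, rfl, rfl⟩
  · rintro ⟨a, b, ⟨hab, hσ⟩, rfl, rfl⟩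
    refine ⟨⟨e.lt_iff_lt.2 hab, ?_⟩, ⟨a, rfl⟩, ⟨b, rfl⟩⟩
    rw [viaFintypeEmbedding_apply_orderEmbedding, viaFintypeEmbedding_apply_orderEmbedding]
    exact hτ hσ

lemma card_inversions_mul_viaFintypeEmbedding_filter_notMem_range
    (hB : (Set.range e).OrdConnected) (hτ : StrictMono (τ ∘ e)) (σ : Perm (Fin m)) :
    #(univ.filter fun x : Fin n × Fin n ↦
        (x.1 < x.2 ∧ (τ * σ.viaFintypeEmbedding e.toEmbedding) x.2 <
          (τ * σ.viaFintypeEmbedding e.toEmbedding) x.1) ∧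
        ¬(x.1 ∈ Set.range e ∧ x.2 ∈ Set.range e)) = inversions n τ := by
  refine card_nbij' (fun x ↦ (σ.viaFintypeEmbedding e.toEmbedding x.1,
      σ.viaFintypeEmbedding e.toEmbedding x.2))
    (fun y ↦ (σ⁻¹.viaFintypeEmbedding e.toEmbedding y.1,
      σ⁻¹.viaFintypeEmbedding e.toEmbedding y.2)) ?_ ?_ ?_ ?_
  · intro x hx
    obtain ⟨-, ⟨hx, hτx⟩, hP⟩ := mem_filter.1 hx
    simp only [coe_filter, mem_univ, true_and, Set.mem_ofPred_eq]
    exact ⟨(viaFintypeEmbedding_lt_iff_of_ordConnected e hB σ hP).2 hx, hτx⟩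
  · rintro ⟨i, j⟩ hy
    simp only [coe_filter, mem_univ, true_and, Set.mem_ofPred_eq] at hy ⊢
    have hP : ¬(i ∈ Set.range e ∧ j ∈ Set.range e) := by
      rintro ⟨⟨a, rfl⟩, ⟨b, rfl⟩⟩
      exact (hτ (e.lt_iff_lt.1 hy.1)).not_gt hy.2
    refine ⟨⟨(viaFintypeEmbedding_lt_iff_of_ordConnected e hB σ⁻¹ hP).2 hy.1, ?_⟩, ?_⟩
    · simpa [← viaFintypeEmbedding_inv] using hy.2
    · rwa [viaFintypeEmbedding_mem_range_iff, viaFintypeEmbedding_mem_range_iff]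
  · intro x _
    simp [← viaFintypeEmbedding_inv]
  · intro y _
    simp [← viaFintypeEmbedding_inv]

lemma inversions_mul_viaFintypeEmbedding (hB : (Set.range e).OrdConnected)
    (hτ : StrictMono (τ ∘ e)) (σ : Perm (Fin m)) :
    inversions n (τ * σ.viaFintypeEmbedding e.toEmbedding) = inversions n τ + inversions m σ := by
  rw [inversions, ← card_filter_add_card_filter_not
    (p := fun x ↦ x.1 ∈ Set.range e ∧ x.2 ∈ Set.range e), filter_filter, filter_filter,
    card_inversions_mul_viaFintypeEmbedding_filter_mem_range e hτ σ,
    card_inversions_mul_viaFintypeEmbedding_filter_notMem_range e hB hτ σ, add_comm]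

end Block

section Decomposition

variable {m n : ℕ} (e : Fin m ↪o Fin n)

def blockDecomposition :
    Perm (Fin n) ≃ {τ : Perm (Fin n) // StrictMono (τ ∘ e)} × Perm (Fin m) where
  toFun ω :=
    (⟨ω * (Tuple.sort (ω ∘ e)).viaFintypeEmbedding e.toEmbedding, by
      rw [mul_viaFintypeEmbedding_comp]
      exact (Tuple.monotone_sort _).strictMono_of_injective
        ((ω.injective.comp e.injective).comp (Tuple.sort _).injective)⟩,
      (Tuple.sort (ω ∘ e))⁻¹)
  invFun x := x.1.1 * x.2.viaFintypeEmbedding e.toEmbedding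
  left_inv ω := by simp [← viaFintypeEmbedding_inv, mul_assoc]
  right_inv := by
    rintro ⟨⟨τ, hτ⟩, σ⟩
    have hsort : σ⁻¹ = Tuple.sort ((τ * σ.viaFintypeEmbedding e.toEmbedding) ∘ e) := by
      rw [Tuple.eq_sort_iff, mul_viaFintypeEmbedding_comp]
      refine ⟨by simpa [Function.comp_assoc] using hτ.monotone, fun i j hij hij' ↦ ?_⟩
      exact absurd (hτ.injective (by simpa using hij')) hij.ne
    refine Prod.ext (Subtype.ext ?_) (by simp only [← hsort, inv_inv])
    simp only [← hsort, ← viaFintypeEmbedding_inv, mul_inv_cancel_right]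

@[simp]
lemma blockDecomposition_symm_apply (x : {τ : Perm (Fin n) // StrictMono (τ ∘ e)} × Perm (Fin m)) :
    (blockDecomposition e).symm x = x.1.1 * x.2.viaFintypeEmbedding e.toEmbedding :=
  rfl

lemma strictAnti_iff_eq_revPerm {σ : Perm (Fin m)} : StrictAnti σ ↔ σ = Fin.revPerm := by
  refine ⟨fun h ↦ Equiv.ext (congrFun ((h.range_inj Fin.rev_strictAnti).1 ?_)), ?_⟩
  · rw [σ.range_eq_univ, Fin.rev_surjective.range_eq]
  · rintro rfl
    exact Fin.rev_strictAnti

lemma strictAnti_mul_viaFintypeEmbedding_comp_iff {τ : Perm (Fin n)} (hτ : StrictMono (τ ∘ e))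
    (σ : Perm (Fin m)) :
    StrictAnti ((τ * σ.viaFintypeEmbedding e.toEmbedding) ∘ e) ↔ σ = Fin.revPerm := by
  rw [mul_viaFintypeEmbedding_comp, ← strictAnti_iff_eq_revPerm]
  exact ⟨fun h _ _ hab ↦ hτ.lt_iff_lt.1 (h hab), hτ.comp_strictAnti⟩

variable {R : Type*} [CommSemiring R] (q : R)

lemma sum_pow_inversions_eq_mul (hB : (Set.range e).OrdConnected) :
    ∑ ω : Perm (Fin n), q ^ inversions n ω =
      (∑ τ : {τ : Perm (Fin n) // StrictMono (τ ∘ e)}, q ^ inversions n τ) *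
        ∑ σ : Perm (Fin m), q ^ inversions m σ := by
  rw [← (blockDecomposition e).symm.sum_comp, Fintype.sum_prod_type, sum_mul_sum]
  refine sum_congr rfl fun τ _ ↦ sum_congr rfl fun σ _ ↦ ?_
  rw [blockDecomposition_symm_apply, inversions_mul_viaFintypeEmbedding e hB τ.2 σ, pow_add]

lemma sum_pow_inversions_strictAnti_eq_mul (hB : (Set.range e).OrdConnected) :
    ∑ ω ∈ univ.filter (fun ω : Perm (Fin n) ↦ StrictAnti (ω ∘ e)), q ^ inversions n ω =
      (∑ τ : {τ : Perm (Fin n) // StrictMono (τ ∘ e)}, q ^ inversions n τ) *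
        q ^ inversions m Fin.revPerm := by
  rw [sum_filter, ← (blockDecomposition e).symm.sum_comp, Fintype.sum_prod_type, sum_mul]
  refine sum_congr rfl fun τ _ ↦ ?_
  simp only [blockDecomposition_symm_apply, strictAnti_mul_viaFintypeEmbedding_comp_iff e τ.2,
    inversions_mul_viaFintypeEmbedding e hB τ.2 _, pow_add, sum_ite_eq', mem_univ, if_true]

end Decomposition

lemma inversions_revPerm (m : ℕ) : inversions m Fin.revPerm = m.choose 2 := by
  simp only [inversions, Fin.revPerm_apply, Fin.rev_lt_rev, and_self]
  simpa using Fintype.card_product_filter_lt (α := Fin m)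

section Succ

lemma range_comp_succ {m : ℕ} (τ : Perm (Fin (m + 1))) : Set.range (τ ∘ Fin.succ) = {τ 0}ᶜ := by
  rw [Set.range_comp, Fin.range_succ, Set.image_compl_eq τ.bijective, Set.image_singleton]

lemma eq_of_strictMono_comp_succ {m : ℕ} {τ τ' : Perm (Fin (m + 1))}
    (hτ : StrictMono (τ ∘ Fin.succ)) (hτ' : StrictMono (τ' ∘ Fin.succ)) (h0 : τ 0 = τ' 0) : τ = τ' := by
  have hsucc : τ ∘ Fin.succ = τ' ∘ Fin.succ :=
    (hτ.range_inj hτ').1 (by rw [range_comp_succ, range_comp_succ, h0])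
  exact Equiv.ext fun i ↦ Fin.cases h0 (congrFun hsucc) i

lemma inversions_of_strictMono_comp_succ {m : ℕ} {τ : Perm (Fin (m + 1))}
    (hτ : StrictMono (τ ∘ Fin.succ)) : inversions (m + 1) τ = τ 0 := by
  have hfst : ∀ i j, i < j → τ j < τ i → i = 0 := by
    intro i j hij hτij
    by_contra hi
    obtain ⟨i, rfl⟩ := Fin.exists_succ_eq.2 hi
    obtain ⟨j, rfl⟩ := Fin.exists_succ_eq.2 (Fin.succ_pos i |>.trans hij).ne'
    exact (hτ (Fin.succ_lt_succ_iff.1 hij)).not_gt hτij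
  calc inversions (m + 1) τ = #(univ.filter fun j ↦ τ j < τ 0) := by
        refine card_nbij' Prod.snd (fun j ↦ (0, j)) ?_ ?_ ?_ ?_
        · rintro ⟨i, j⟩ hx
          simp only [coe_filter, mem_univ, true_and, Set.mem_ofPred_eq] at hx ⊢
          exact hfst i j hx.1 hx.2 ▸ hx.2
        · rintro j hj
          simp only [coe_filter, mem_univ, true_and, Set.mem_ofPred_eq] at hj ⊢
          exact ⟨Fin.pos_iff_ne_zero.2 fun h ↦ (h ▸ hj).false, hj⟩
        · rintro ⟨i, j⟩ hx
          simp only [coe_filter, mem_univ, true_and, Set.mem_ofPred_eq] at hx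
          rw [hfst i j hx.1 hx.2]
        · intro j _
          rfl
    _ = #(Iio (τ 0)) := card_equiv τ fun j ↦ by simp
    _ = τ 0 := Fin.card_Iio _

lemma ordConnected_range_succOrderEmb (m : ℕ) : (Set.range (Fin.succOrderEmb m)).OrdConnected := by
  refine ⟨fun x hx _ _ z hz ↦ ?_⟩
  simp only [Fin.coe_succOrderEmb, Fin.range_succ] at hx ⊢
  exact fun hz0 ↦ hx (le_antisymm (hz0 ▸ hz.1) (Fin.zero_le x))

lemma sum_pow_inversions_strictMono_comp_succ {R : Type*} [CommSemiring R] (q : R) (m : ℕ) :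
    ∑ τ : {τ : Perm (Fin (m + 1)) // StrictMono (τ ∘ Fin.succ)}, q ^ inversions (m + 1) τ =
      ∑ j ∈ range (m + 1), q ^ j := by
  have hbij : Function.Bijective
      fun τ : {τ : Perm (Fin (m + 1)) // StrictMono (τ ∘ Fin.succ)} ↦ τ.1 0 := by
    refine ⟨fun τ τ' h ↦ Subtype.ext (eq_of_strictMono_comp_succ τ.2 τ'.2 h), fun p ↦ ?_⟩
    refine ⟨⟨p.cycleRange.symm, ?_⟩, Fin.cycleRange_symm_zero p⟩
    simpa [Function.comp_def, Fin.cycleRange_symm_succ] using Fin.strictMono_succAbove p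
  rw [← Fin.sum_univ_eq_sum_range, ← Fintype.sum_bijective _ hbij _ _ fun τ ↦ rfl]
  exact sum_congr rfl fun τ _ ↦ by rw [inversions_of_strictMono_comp_succ τ.2]

theorem sum_pow_inversions {R : Type*} [CommSemiring R] (q : R) (m : ℕ) :
    ∑ σ : Perm (Fin m), q ^ inversions m σ = ∏ i ∈ range m, ∑ j ∈ range (i + 1), q ^ j := by
  induction m with
  | zero => simp [inversions]
  | succ m ih =>
    rw [sum_pow_inversions_eq_mul (Fin.succOrderEmb m) q (ordConnected_range_succOrderEmb m),
      ih, prod_range_succ, mul_comm]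
    congr 1
    exact sum_pow_inversions_strictMono_comp_succ q m

end Succ

end Equiv.Perm

def Fin.natAddCastLEOrderEmb (l : ℕ) {m n : ℕ} (h : l + m ≤ n) : Fin m ↪o Fin n :=
  (Fin.natAddOrderEmb l).trans (Fin.castLEOrderEmb h)

@[simp]
lemma Fin.val_natAddCastLEOrderEmb (l : ℕ) {m n : ℕ} (h : l + m ≤ n) (a : Fin m) :
    (Fin.natAddCastLEOrderEmb l h a : ℕ) = l + a :=
  rfl

lemma Fin.ordConnected_range_natAddCastLEOrderEmb (l : ℕ) {m n : ℕ} (h : l + m ≤ n) :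
    (Set.range (Fin.natAddCastLEOrderEmb l h)).OrdConnected := by
  refine ⟨?_⟩
  rintro _ ⟨a, rfl⟩ _ ⟨b, rfl⟩ z ⟨ha, hb⟩
  rw [Fin.le_def, Fin.val_natAddCastLEOrderEmb] at ha hb
  exact ⟨⟨z - l, by omega⟩, Fin.ext (by simp only [Fin.val_natAddCastLEOrderEmb]; omega)⟩

lemma consecutive_descents_iff_strictAnti {l k n : ℕ} (h : l + (k + 1) ≤ n)
    (ω : Equiv.Perm (Fin n)) :
    (∀ p : Fin n × Fin n, p.1.val + 1 = p.2.val → l + 1 ≤ p.1.val + 1 →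
        p.1.val + 1 < l + 1 + k → ω p.2 < ω p.1) ↔
      StrictAnti (ω ∘ Fin.natAddCastLEOrderEmb l h) := by
  rw [Fin.strictAnti_iff_succ_lt]
  refine ⟨fun hω i ↦ hω (_, _) ?_ ?_ ?_, fun hω ⟨i, j⟩ hij hl hk ↦ ?_⟩
  all_goals simp only [Fin.val_natAddCastLEOrderEmb, Fin.val_succ, Fin.val_castSucc] at *
  · omega
  · omega
  · omega
  · obtain ⟨a, rfl⟩ : ∃ a : Fin k, Fin.natAddCastLEOrderEmb l h a.castSucc = i :=
      ⟨⟨i - l, by omega⟩, Fin.ext (by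
        simp only [Fin.val_natAddCastLEOrderEmb, Fin.val_castSucc]
        omega)⟩
    obtain rfl : Fin.natAddCastLEOrderEmb l h a.succ = j := Fin.ext (by
      simp only [Fin.val_natAddCastLEOrderEmb, Fin.val_succ, Fin.val_castSucc] at hij ⊢
      omega)
    exact hω a

/-- Under the Mallows measure, the probability that positions `s, s+1, …, s+k-1`
(1-indexed, a position `i` being a descent when `ω(i) > ω(i+1)`) are all descents
is `q^{C(k+1,2)} / [k+1]_q!`.  A pair `p` of consecutive indices of `Fin n`
represents the (1-indexed) position `p.1.val + 1`. -/
theorem mallows_consecutive_descents (q : ℝ) (hq : 0 < q) (n s k : ℕ)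
    (hs : 1 ≤ s) (hsk : s + k ≤ n) :
    ∑ ω ∈ (Finset.univ : Finset (Equiv.Perm (Fin n))).filter
        (fun ω => ∀ p : Fin n × Fin n, p.1.val + 1 = p.2.val →
          s ≤ p.1.val + 1 → p.1.val + 1 < s + k → ω p.2 < ω p.1),
      mallows q n ω = q ^ ((k + 1).choose 2) / qFactorial q (k + 1) := by
  obtain ⟨l, rfl⟩ : ∃ l, s = l + 1 := ⟨s - 1, by omega⟩
  have h : l + (k + 1) ≤ n := by omega
  set e := Fin.natAddCastLEOrderEmb l h
  have hB := Fin.ordConnected_range_natAddCastLEOrderEmb l h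
  have hA : 0 < ∑ τ : {τ : Equiv.Perm (Fin n) // StrictMono (τ ∘ e)}, q ^ inversions n τ :=
    sum_pos (fun τ _ ↦ pow_pos hq _) ⟨⟨1, e.strictMono⟩, mem_univ _⟩
  have hn : qFactorial q n = ∑ ω : Equiv.Perm (Fin n), q ^ inversions n ω :=
    (Equiv.Perm.sum_pow_inversions q n).symm
  have hk : qFactorial q (k + 1) = ∑ σ : Equiv.Perm (Fin (k + 1)), q ^ inversions (k + 1) σ :=
    (Equiv.Perm.sum_pow_inversions q (k + 1)).symm
  simp only [mallows, ← sum_div]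
  rw [filter_congr fun ω _ ↦ consecutive_descents_iff_strictAnti h ω,
    Equiv.Perm.sum_pow_inversions_strictAnti_eq_mul e q hB, hn,
    Equiv.Perm.sum_pow_inversions_eq_mul e q hB, ← hk, Equiv.Perm.inversions_revPerm]
  exact mul_div_mul_left _ _ hA.ne'
end

section
/- Under the Mallows measure p_q on S_n, the expected number of descents equals (q/(q+1))·(n-1). -/
/-- The number of descents of `ω`: the number of pairs of consecutive positions
`(i, i+1)` with `ω(i+1) < ω(i)`. -/
def descents (n : ℕ) (ω : Equiv.Perm (Fin n)) : ℕ :=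
  ((Finset.univ : Finset (Fin n × Fin n)).filter
    (fun p => p.1.val + 1 = p.2.val ∧ ω p.2 < ω p.1)).card

/-!
Right multiplication by the adjacent transposition `(i i+1)` is an involution of `S_n` that
exchanges the permutations with a descent at `i` and those with an ascent there, and it changes
the number of inversions by exactly one. Hence the descent mass at `i` is `q` times the ascent
mass, so a descent at `i` has Mallows probability `q / (q + 1)`; summing over the `n - 1`
positions gives the theorem. That `p_q` is a probability measure, `∑ q^I(ω) = [n]_q!`, follows by
splitting off `ω(0) = p`, which accounts for exactly `p` inversions.
-/

open Finset Equiv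

def insertAt {n : ℕ} (p : Fin (n + 1)) (e : Perm (Fin n)) : Perm (Fin (n + 1)) :=
  ((finSuccEquiv' 0).trans e.optionCongr).trans (finSuccEquiv' p).symm

@[simp] lemma insertAt_zero {n : ℕ} (p : Fin (n + 1)) (e : Perm (Fin n)) :
    insertAt p e 0 = p := by
  simp [insertAt]

@[simp] lemma insertAt_succ {n : ℕ} (p : Fin (n + 1)) (e : Perm (Fin n)) (j : Fin n) :
    insertAt p e j.succ = p.succAbove (e j) := by
  have h : finSuccEquiv' (0 : Fin (n + 1)) j.succ = some j := by
    rw [← Fin.zero_succAbove j, finSuccEquiv'_succAbove]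
  simp [insertAt, h, finSuccEquiv'_symm_some]

lemma inversions_insertAt {n : ℕ} (p : Fin (n + 1)) (e : Perm (Fin n)) :
    inversions (n + 1) (insertAt p e) = p + inversions n e := by
  have hp : ∑ j, (if (e j).castSucc < p then 1 else 0) = (p : ℕ) := by
    rw [Equiv.sum_comp e (fun v : Fin n => if v.castSucc < p then 1 else 0), ← card_filter]
    simp only [Fin.lt_def, Fin.val_castSucc, Fin.card_filter_val_lt]
    omega
  simp only [inversions, card_filter, Fintype.sum_prod_type, Fin.sum_univ_succ, insertAt_zero,
    insertAt_succ, false_and, Fin.not_lt_zero, Fin.succ_pos, true_and,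
    Fin.succ_lt_succ_iff, Fin.succAbove_lt_succAbove_iff, Fin.succAbove_lt_iff_castSucc_lt]
  simp only [if_false, zero_add, hp]

lemma insertAt_bijective (n : ℕ) :
    Function.Bijective (fun pe : Fin (n + 1) × Perm (Fin n) => insertAt pe.1 pe.2) := by
  rw [Fintype.bijective_iff_injective_and_card]
  refine ⟨fun ⟨p, e⟩ ⟨p', e'⟩ h => ?_, by simp [Fintype.card_perm, Nat.factorial_succ]⟩
  obtain rfl : p = p' := by simpa using DFunLike.congr_fun h 0
  rw [show e = e' from Equiv.ext fun j => by simpa using DFunLike.congr_fun h j.succ]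

lemma sum_pow_inversions_succ (q : ℝ) (n : ℕ) :
    ∑ ω : Perm (Fin (n + 1)), q ^ inversions (n + 1) ω =
      (∑ j ∈ range (n + 1), q ^ j) * ∑ e : Perm (Fin n), q ^ inversions n e := by
  rw [← Fintype.sum_bijective _ (insertAt_bijective n) _ _ fun _ => rfl, Fintype.sum_prod_type,
    ← Fin.sum_univ_eq_sum_range, sum_mul]
  simp only [inversions_insertAt, pow_add, mul_sum]

lemma sum_pow_inversions (q : ℝ) (n : ℕ) :
    ∑ ω : Perm (Fin n), q ^ inversions n ω = qFactorial q n := by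
  induction n with
  | zero => simp [qFactorial, inversions]
  | succ n ih => rw [sum_pow_inversions_succ, ih, qFactorial, qFactorial, prod_range_succ, mul_comm]

lemma qFactorial_pos {q : ℝ} (hq : 0 < q) (n : ℕ) : 0 < qFactorial q n :=
  prod_pos fun i _ => sum_pos (fun j _ => pow_pos hq j) (nonempty_range_iff.mpr i.succ_ne_zero)

lemma sum_mallows {q : ℝ} {n : ℕ} (hq : qFactorial q n ≠ 0) :
    ∑ ω : Perm (Fin n), mallows q n ω = 1 := by
  simp only [mallows, ← sum_div, sum_pow_inversions, div_self hq]

lemma swap_lt_swap_iff {n : ℕ} {a b c d : Fin n} (hab : (a : ℕ) + 1 = b)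
    (hab' : ¬(c = a ∧ d = b)) (hba : ¬(c = b ∧ d = a)) :
    swap a b c < swap a b d ↔ c < d := by
  simp only [Fin.ext_iff] at hab' hba
  simp only [swap_apply_def, Fin.lt_def]
  split_ifs <;> simp only [Fin.ext_iff] at * <;> omega

lemma inversions_mul_swap {n : ℕ} {a b : Fin n} (hab : (a : ℕ) + 1 = b) {ω : Perm (Fin n)}
    (h : ω a < ω b) : inversions n (ω * swap a b) = inversions n ω + 1 := by
  have hlt : a < b := Fin.lt_def.mpr (by omega)
  have hreindex : inversions n (ω * swap a b) =
      #{p : Fin n × Fin n | swap a b p.1 < swap a b p.2 ∧ ω p.2 < ω p.1} := by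
    rw [inversions, card_filter, card_filter, ← (prodCongr (swap a b) (swap a b)).sum_comp]
    simp only [Perm.mul_apply, prodCongr_apply, Prod.map_fst, Prod.map_snd, swap_apply_self]
  have hins : univ.filter (fun p : Fin n × Fin n => swap a b p.1 < swap a b p.2 ∧
      ω p.2 < ω p.1) = insert (b, a) (univ.filter fun p => p.1 < p.2 ∧ ω p.2 < ω p.1) := by
    ext ⟨c, d⟩
    simp only [mem_filter, mem_univ, true_and, mem_insert, Prod.mk.injEq]
    by_cases hba : c = b ∧ d = a
    · obtain ⟨rfl, rfl⟩ := hba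
      simp [h, hlt]
    by_cases hab' : c = a ∧ d = b
    · obtain ⟨rfl, rfl⟩ := hab'
      simp [hlt.not_gt, h.not_gt, hlt.ne]
    rw [swap_lt_swap_iff hab hab' hba]
    simp [hba]
  rw [hreindex, hins, card_insert_of_notMem (by simp [hlt.not_gt]), inversions]

lemma mallows_mul_swap {q : ℝ} {n : ℕ} {a b : Fin n} (hab : (a : ℕ) + 1 = b)
    {ω : Perm (Fin n)} (h : ω a < ω b) : mallows q n (ω * swap a b) = q * mallows q n ω := by
  rw [mallows, mallows, inversions_mul_swap hab h, pow_succ]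
  ring

lemma sum_mallows_filter_lt {q : ℝ} (hq : 0 < q) {n : ℕ} {a b : Fin n}
    (hab : (a : ℕ) + 1 = b) :
    ∑ ω : Perm (Fin n) with ω b < ω a, mallows q n ω = q / (q + 1) := by
  have hne : a ≠ b := fun h => by rw [h] at hab; omega
  set D := ∑ ω : Perm (Fin n) with ω b < ω a, mallows q n ω
  set A := ∑ ω : Perm (Fin n) with ¬ ω b < ω a, mallows q n ω
  have hswap : D = q * A := by
    rw [mul_sum]
    refine sum_nbij' (· * swap a b) (· * swap a b) (fun ω hω => ?_) (fun ω hω => ?_)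
      (by simp) (by simp) (fun ω hω => ?_) <;>
      simp only [mem_filter, mem_univ, true_and, Perm.mul_apply, swap_apply_left,
        swap_apply_right] at hω ⊢
    · exact hω.asymm
    · exact lt_of_le_of_ne (not_lt.mp hω) (ω.injective.ne hne)
    · simpa using mallows_mul_swap (q := q) (ω := ω * swap a b) hab (by simpa using hω)
  have htotal : D + A = 1 :=
    (sum_filter_add_sum_filter_not _ _ _).trans (sum_mallows (qFactorial_pos hq n).ne')
  rw [eq_div_iff (by positivity)]
  linear_combination q * htotal + hswap

def adjacentPairs (n : ℕ) : Finset (Fin n × Fin n) := univ.filter fun p => p.1.val + 1 = p.2.val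

lemma card_adjacentPairs (n : ℕ) : #(adjacentPairs n) = n - 1 := by
  rw [← card_range (n - 1)]
  refine card_bij (fun p _ => p.1.val) (fun p hp => ?_) (fun p hp p' hp' h => ?_) (fun k hk => ?_)
  all_goals simp only [adjacentPairs, mem_filter, mem_univ, true_and, mem_range] at *
  · omega
  · exact Prod.ext (Fin.ext h) (Fin.ext (by omega))
  · exact ⟨(⟨k, by omega⟩, ⟨k + 1, by omega⟩), rfl, rfl⟩

lemma descents_eq_card_filter_adjacentPairs (n : ℕ) (ω : Perm (Fin n)) :
    descents n ω = #{p ∈ adjacentPairs n | ω p.2 < ω p.1} := by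
  rw [descents, adjacentPairs, filter_filter]

/-- Under the Mallows measure `p_q` on `S_n`, the expected number of descents is
`(q/(q+1)) (n-1)`. -/
theorem mallows_expected_descents (q : ℝ) (hq : 0 < q) (n : ℕ) (hn : 1 ≤ n) :
    ∑ ω : Equiv.Perm (Fin n), mallows q n ω * (descents n ω : ℝ) =
      q / (q + 1) * ((n : ℝ) - 1) := by
  calc ∑ ω : Perm (Fin n), mallows q n ω * (descents n ω : ℝ)
      = ∑ ω : Perm (Fin n), ∑ p ∈ adjacentPairs n with ω p.2 < ω p.1, mallows q n ω := by
        simp [descents_eq_card_filter_adjacentPairs, mul_comm]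
    _ = ∑ p ∈ adjacentPairs n, ∑ ω : Perm (Fin n) with ω p.2 < ω p.1, mallows q n ω :=
        sum_comm' fun _ _ => by simp only [mem_filter, mem_univ, true_and, and_comm]
    _ = ∑ _p ∈ adjacentPairs n, q / (q + 1) :=
        sum_congr rfl fun p hp => sum_mallows_filter_lt hq (mem_filter.mp hp).2
    _ = q / (q + 1) * ((n : ℝ) - 1) := by
        rw [sum_const, card_adjacentPairs, nsmul_eq_mul, Nat.cast_sub hn, Nat.cast_one, mul_comm]
end

section
/- Let T and T′ be I×J contingency tables with the same row and column sums, and suppose the vector of entries of T is majorized by that of T′ (and they are not rearrangements of each other). Then the Fisher-Yates probabilities satisfy P(T) > P(T′), where P(T) = (∏_i λ_i!)(∏_j μ_j!)/(n! ∏_{i,j} T_{ij}!). In particular, T ↦ −∑_{i,j} log(T_{ij}!) is a Schur-concave function of the entries. -/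
/-- The multiset of entries of an `I × J` table. -/
def tableEntries (I J : ℕ) (T : Fin I → Fin J → ℕ) : Multiset ℕ :=
  (Finset.univ : Finset (Fin I × Fin J)).val.map (fun p => T p.1 p.2)

/-- The Fisher-Yates probability of a table with row sums `lam`, column sums `mu`
and total `n`. -/
def fisherYates (I J n : ℕ) (lam : Fin I → ℕ) (mu : Fin J → ℕ)
    (T : Fin I → Fin J → ℕ) : ℚ :=
  ((∏ i, ((lam i).factorial : ℚ)) * ∏ j, ((mu j).factorial : ℚ)) /
    ((n.factorial : ℚ) * ∏ i, ∏ j, ((T i j).factorial : ℚ))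

/-!
Write `h_s(t) = ∑_{x ∈ s} (x - t)⁺` for the hinge sums of a multiset `s` of naturals. If the
sorted entries of `s` are majorized by those of `s'`, then `h_s ≤ h_{s'}` pointwise (for sorted
`s` the hinge sum is a partial sum shifted by a multiple of `t`), and strictly somewhere unless
`s = s'`. On the other hand every `f : ℕ → G` is a combination of hinges,
`f x = f 0 + x Δf(0) + ∑_{t ≥ 0} Δ²f(t) (x - (t + 1))⁺`, so for `f` with strictly increasing
increments and `s`, `s'` of equal size and sum, `∑_s f < ∑_{s'} f`. Apply this to
`f x = log x!`, whose increments `log (x + 1)` increase strictly.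
-/

open scoped fwdDiff Nat

theorem List.sum_map_tsub_eq_zero {l : List ℕ} {t : ℕ} (h : ∀ x ∈ l, x ≤ t) :
    (l.map (· - t)).sum = 0 :=
  sum_eq_zero fun _ hx => by
    obtain ⟨x, hxl, rfl⟩ := mem_map.mp hx
    exact Nat.sub_eq_zero_of_le (h x hxl)

theorem List.sum_take_le_sum_map_tsub_add (l : List ℕ) (t k : ℕ) :
    (l.take k).sum ≤ (l.map (· - t)).sum + k * t := by
  induction l generalizing k with
  | nil => simp
  | cons a r ih =>
    cases k with
    | zero => simp
    | succ k =>
      have := ih k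
      simp only [take_succ_cons, sum_cons, map_cons]
      grind

theorem List.exists_sum_take_eq_sum_map_tsub_add {l : List ℕ} (hl : l.Pairwise (· ≥ ·))
    (t : ℕ) : ∃ k, (l.take k).sum = (l.map (· - t)).sum + k * t := by
  induction l with
  | nil => simp
  | cons a r ih =>
    obtain ⟨har, hr⟩ := pairwise_cons.mp hl
    by_cases hat : a ≤ t
    · refine ⟨0, ?_⟩
      rw [take_zero, sum_nil, zero_mul, add_zero, sum_map_tsub_eq_zero fun x hx => ?_]
      exact (mem_cons.mp hx).elim (fun h => h ▸ hat) fun h => (har x h).trans hat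
    · obtain ⟨k, hk⟩ := ih hr
      refine ⟨k + 1, ?_⟩
      simp only [take_succ_cons, sum_cons, map_cons, hk]
      grind

theorem List.sum_map_tsub_le_of_sum_take_le {l l' : List ℕ} (hl : l.Pairwise (· ≥ ·))
    (h : ∀ k, (l.take k).sum ≤ (l'.take k).sum) (t : ℕ) :
    (l.map (· - t)).sum ≤ (l'.map (· - t)).sum := by
  obtain ⟨k, hk⟩ := exists_sum_take_eq_sum_map_tsub_add hl t
  have := (h k).trans (sum_take_le_sum_map_tsub_add l' t k)
  omega

theorem List.exists_sum_map_tsub_lt_of_sum_take_le {l l' : List ℕ} (hl : l.Pairwise (· ≥ ·))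
    (hlen : l.length = l'.length) (h : ∀ k, (l.take k).sum ≤ (l'.take k).sum) (hne : l ≠ l') :
    ∃ t, (l.map (· - t)).sum < (l'.map (· - t)).sum := by
  induction l generalizing l' with
  | nil => exact absurd (length_eq_zero_iff.mp hlen.symm).symm hne
  | cons a r ih =>
    obtain _ | ⟨a', r'⟩ := l'
    · simp at hlen
    obtain ⟨har, hr⟩ := pairwise_cons.mp hl
    have haa' : a ≤ a' := by simpa using h 1
    obtain rfl | hlt := haa'.eq_or_lt
    · obtain ⟨t, ht⟩ := ih hr (by simpa using hlen) (fun k => by simpa using h (k + 1))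
        (fun hrr' => hne (hrr' ▸ rfl))
      exact ⟨t, by simpa using ht⟩
    · refine ⟨a, ?_⟩
      simp only [map_cons, sum_cons, sum_map_tsub_eq_zero har]
      omega

theorem eq_add_nsmul_fwdDiff_add_sum_nsmul_fwdDiff_fwdDiff {G : Type*} [AddCommGroup G]
    (f : ℕ → G) {x N : ℕ} (hx : x ≤ N) :
    f x = f 0 + x • Δ_[1] f 0 + ∑ t ∈ Finset.range N, (x - (t + 1)) • Δ_[1] (Δ_[1] f) t := by
  induction x with
  | zero => simp
  | succ x ih =>
    have hsplit : ∀ t ∈ Finset.range N, (x + 1 - (t + 1)) • Δ_[1] (Δ_[1] f) t =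
        (x - (t + 1)) • Δ_[1] (Δ_[1] f) t + if t < x then Δ_[1] (Δ_[1] f) t else 0 := by
      intro t _
      split_ifs with h
      · rw [← succ_nsmul]; congr 1; omega
      · rw [add_zero]; congr 1; omega
    have htel : ∑ t ∈ Finset.range N, (if t < x then Δ_[1] (Δ_[1] f) t else 0) =
        Δ_[1] f x - Δ_[1] f 0 := by
      rw [← Finset.sum_filter, show (Finset.range N).filter (· < x) = Finset.range x by
        ext; simp; omega]
      exact Finset.sum_range_sub (Δ_[1] f) x
    rw [Finset.sum_congr rfl hsplit, Finset.sum_add_distrib, htel,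
      show f (x + 1) = f x + Δ_[1] f x from (add_sub_cancel _ _).symm, ih (by omega), succ_nsmul]
    abel

theorem Multiset.sum_map_eq_add_nsmul_fwdDiff_add_sum_nsmul_fwdDiff_fwdDiff {G : Type*}
    [AddCommGroup G] (f : ℕ → G) {s : Multiset ℕ} {N : ℕ} (hN : ∀ x ∈ s, x ≤ N) :
    (s.map f).sum = card s • f 0 + s.sum • Δ_[1] f 0 +
      ∑ t ∈ Finset.range N, (s.map (· - (t + 1))).sum • Δ_[1] (Δ_[1] f) t := by
  rw [map_congr rfl fun x hx => eq_add_nsmul_fwdDiff_add_sum_nsmul_fwdDiff_fwdDiff f (hN x hx),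
    sum_map_add, sum_map_add, map_const', sum_replicate, sum_smul]
  simp only [Finset.sum_eq_multiset_sum]
  rw [sum_map_sum_map]
  simp only [sum_smul, map_map, Function.comp_def]

theorem Multiset.sum_map_lt_sum_map_of_sum_map_tsub_le {G : Type*} [AddCommGroup G]
    [PartialOrder G] [IsOrderedAddMonoid G] (f : ℕ → G) (hf : StrictMono (Δ_[1] f))
    {s s' : Multiset ℕ} (hcard : card s = card s') (hsum : s.sum = s'.sum)
    (hle : ∀ t, (s.map (· - t)).sum ≤ (s'.map (· - t)).sum)
    (hlt : ∃ t, (s.map (· - t)).sum < (s'.map (· - t)).sum) :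
    (s.map f).sum < (s'.map f).sum := by
  obtain ⟨t, ht⟩ := hlt
  obtain ⟨u, rfl⟩ : ∃ u, t = u + 1 := by
    refine Nat.exists_eq_add_one.mpr (Nat.pos_of_ne_zero ?_)
    rintro rfl
    simp [hsum] at ht
  have hconvex : ∀ v, 0 < Δ_[1] (Δ_[1] f) v := fun v => sub_pos.mpr (hf v.lt_succ_self)
  have hbound : ∀ x ∈ s + s', x ≤ (s + s').sum + u + 1 := fun x hx => by
    have := le_sum_of_mem hx
    omega
  rw [sum_map_eq_add_nsmul_fwdDiff_add_sum_nsmul_fwdDiff_fwdDiff f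
      fun x hx => hbound x (mem_add.mpr (Or.inl hx)),
    sum_map_eq_add_nsmul_fwdDiff_add_sum_nsmul_fwdDiff_fwdDiff f
      fun x hx => hbound x (mem_add.mpr (Or.inr hx)), hcard, hsum]
  refine add_lt_add_of_le_of_lt le_rfl (Finset.sum_lt_sum (fun v _ => ?_) ⟨u, ?_, ?_⟩)
  · exact nsmul_le_nsmul_left (hconvex v).le (hle (v + 1))
  · exact Finset.mem_range.mpr (by omega)
  · exact nsmul_lt_nsmul_left (hconvex u) ht

theorem Multiset.sum_map_lt_sum_map_of_sum_take_sort_le {G : Type*} [AddCommGroup G]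
    [PartialOrder G] [IsOrderedAddMonoid G] (f : ℕ → G) (hf : StrictMono (Δ_[1] f))
    {s s' : Multiset ℕ} (hcard : card s = card s') (hsum : s.sum = s'.sum)
    (hmaj : ∀ k, (((s.sort (· ≤ ·)).reverse.take k).sum ≤
      ((s'.sort (· ≤ ·)).reverse.take k).sum))
    (hne : s ≠ s') :
    (s.map f).sum < (s'.map f).sum := by
  have hsorted : ∀ s : Multiset ℕ, ((s.sort (· ≤ ·)).reverse : Multiset ℕ) = s ∧
      (s.sort (· ≤ ·)).reverse.Pairwise (· ≥ ·) := fun s =>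
    ⟨by rw [coe_reverse, sort_eq], List.pairwise_reverse.mpr (pairwise_sort s _)⟩
  obtain ⟨hs, hl⟩ := hsorted s
  obtain ⟨hs', -⟩ := hsorted s'
  refine sum_map_lt_sum_map_of_sum_map_tsub_le f hf hcard hsum (fun t => ?_) ?_
  · rw [← hs, ← hs']
    exact List.sum_map_tsub_le_of_sum_take_le hl hmaj t
  · rw [← hs, ← hs'] at hcard hne ⊢
    exact List.exists_sum_map_tsub_lt_of_sum_take_le hl hcard hmaj fun h => hne (h ▸ rfl)

theorem strictMono_fwdDiff_log_factorial : StrictMono (Δ_[1] fun n : ℕ => Real.log n !) := by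
  have h : Δ_[1] (fun n : ℕ => Real.log n !) = fun n : ℕ => Real.log (n + 1) := by
    ext n
    simp only [fwdDiff, Nat.factorial_succ, Nat.cast_mul, Nat.cast_add_one]
    rw [Real.log_mul (by positivity) (by positivity), add_sub_cancel_right]
  rw [h]
  exact fun m n hmn => Real.log_lt_log (by positivity) (by exact_mod_cast Nat.succ_lt_succ hmn)

theorem Multiset.prod_map_factorial_lt_of_sum_take_sort_le {s s' : Multiset ℕ}
    (hcard : card s = card s') (hsum : s.sum = s'.sum)
    (hmaj : ∀ k, (((s.sort (· ≤ ·)).reverse.take k).sum ≤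
      ((s'.sort (· ≤ ·)).reverse.take k).sum))
    (hne : s ≠ s') :
    (s.map Nat.factorial).prod < (s'.map Nat.factorial).prod := by
  have hpos : ∀ s : Multiset ℕ, 0 < ((s.map Nat.factorial).prod : ℝ) := fun s => by
    exact_mod_cast prod_pos fun n hn => by
      obtain ⟨m, -, rfl⟩ := mem_map.mp hn
      exact m.factorial_pos
  have hlog : ∀ s : Multiset ℕ, Real.log ((s.map Nat.factorial).prod : ℝ) =
      (s.map fun n => Real.log n !).sum := fun s => by
    rw [Nat.cast_multiset_prod, Real.log_multiset_prod, map_map, map_map]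
    · rfl
    · simp [Nat.factorial_ne_zero]
  rw [← Nat.cast_lt (α := ℝ), ← Real.log_lt_log_iff (hpos s) (hpos s'), hlog, hlog]
  exact sum_map_lt_sum_map_of_sum_take_sort_le _ strictMono_fwdDiff_log_factorial hcard hsum
    hmaj hne

@[to_additive]
theorem prod_map_tableEntries {M : Type*} [CommMonoid M] (I J : ℕ) (T : Fin I → Fin J → ℕ)
    (g : ℕ → M) : ((tableEntries I J T).map g).prod = ∏ i, ∏ j, g (T i j) := by
  rw [tableEntries, Multiset.map_map]
  exact Fintype.prod_prod_type _

theorem fisherYates_schur_concave_general (I J n : ℕ) (lam : Fin I → ℕ) (mu : Fin J → ℕ)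
    (T T' : Fin I → Fin J → ℕ)
    (hTr : ∀ i, ∑ j, T i j = lam i)
    (hT'r : ∀ i, ∑ j, T' i j = lam i)
    (hmaj : ∀ k : ℕ,
      ((((tableEntries I J T).sort (· ≤ ·)).reverse.take k).sum ≤
        (((tableEntries I J T').sort (· ≤ ·)).reverse.take k).sum))
    (hne : tableEntries I J T ≠ tableEntries I J T') :
    fisherYates I J n lam mu T' < fisherYates I J n lam mu T := by
  have hcard : Multiset.card (tableEntries I J T) = Multiset.card (tableEntries I J T') := by
    simp [tableEntries]
  have hsum : (tableEntries I J T).sum = (tableEntries I J T').sum := by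
    rw [← Multiset.map_id (tableEntries I J T), ← Multiset.map_id (tableEntries I J T'),
      sum_map_tableEntries, sum_map_tableEntries]
    simp only [id, hTr, hT'r]
  have hprod : ∏ i, ∏ j, (T i j)! < ∏ i, ∏ j, (T' i j)! := by
    simpa only [prod_map_tableEntries] using
      Multiset.prod_map_factorial_lt_of_sum_take_sort_le hcard hsum hmaj hne
  unfold fisherYates
  refine div_lt_div_of_pos_left (by positivity) (by positivity) ?_
  exact mul_lt_mul_of_pos_left (by exact_mod_cast hprod) (by positivity)

/-- If the entries of `T` are majorized by those of `T'` (same margins, and the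
entries are not rearrangements of each other), then `P(T) > P(T')` for the
Fisher-Yates distribution: the Fisher-Yates probability is Schur-concave in the
table entries. Majorization is expressed via the sorted-decreasing partial sums. -/
theorem fisherYates_schur_concave (I J n : ℕ) (lam : Fin I → ℕ) (mu : Fin J → ℕ)
    (T T' : Fin I → Fin J → ℕ)
    (hTr : ∀ i, ∑ j, T i j = lam i) (hTc : ∀ j, ∑ i, T i j = mu j)
    (hT'r : ∀ i, ∑ j, T' i j = lam i) (hT'c : ∀ j, ∑ i, T' i j = mu j)
    (htot : ∑ i, lam i = n)
    (hmaj : ∀ k : ℕ,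
      ((((tableEntries I J T).sort (· ≤ ·)).reverse.take k).sum ≤
        (((tableEntries I J T').sort (· ≤ ·)).reverse.take k).sum))
    (hne : tableEntries I J T ≠ tableEntries I J T') :
    fisherYates I J n lam mu T' < fisherYates I J n lam mu T :=
  fisherYates_schur_concave_general I J n lam mu T T' hTr hT'r hmaj hne
end
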